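/- Let M be a real symmetric p×p matrix and let 0 ≤ r ≤ p. Then there exists a real symmetric p×p matrix X with rank X ≤ r such that ‖M − X‖_F ≤ ‖M − Y‖_F for every real p×p matrix Y with rank Y ≤ r. In other words, the best rank-at-most-r Frobenius-norm approximation of a symmetric matrix can be chosen symmetric, so the minimum over all matrices of rank at most r equals the minimum over symmetric matrices of rank at most r. -/

import Mathlib

/-!
Diagonalise `M = U D Uᵀ` with `U` orthogonal; conjugation by `U` preserves both rank and the
Frobenius norm, so it suffices to approximate the diagonal matrix `D = diagonal d`, and the
truncation `X` of `D` that zeroes the entries on a set `T` of `p - r` indices with the smallest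
`d i ^ 2` is symmetric. It is optimal because for `rank Z ≤ r` the orthogonal projection
`P = W Wᵀ` onto `ker Z` has trace at least `p - r` and diagonal entries in `[0, 1]`, whence
`‖D - Z‖² ≥ ‖(D - Z) W‖² = ‖D W‖² = ∑ i, d i ^ 2 * P i i ≥ ∑ i ∈ T, d i ^ 2 = ‖D - X‖²`.
-/

open Matrix

/-- The Frobenius norm `‖A‖_F = sqrt(tr(Aᵀ A))` of a real square matrix. -/
noncomputable def frobNorm {p : ℕ} (A : Matrix (Fin p) (Fin p) ℝ) : ℝ :=
  Real.sqrt ((Aᵀ * A).trace)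

open Finset

section ThDXhold

variable {ι : Type*} [Fintype ι] [DecidableEq ι]

theorem exists_card_eq_le_thDXhold_le (c : ι → ℝ) (hc : 0 ≤ c) {k : ℕ}
    (hk : k ≤ Fintype.card ι) :
    ∃ T : Finset ι, #T = k ∧
      ∃ m, 0 ≤ m ∧ (∀ i ∈ T, c i ≤ m) ∧ ∀ i ∉ T, m ≤ c i := by
  induction k with
  | zero => exact ⟨∅, rfl, 0, le_rfl, by simp, fun i _ => hc i⟩
  | succ k ih =>
    obtain ⟨T, hTk, m, -, hTm, hmT⟩ := ih (by omega)
    have hne : Tᶜ.Nonempty := by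
      rw [← card_pos, card_compl]
      omega
    obtain ⟨j, hjT, hj⟩ := exists_min_image Tᶜ c hne
    have hjT : j ∉ T := mem_compl.mp hjT
    refine ⟨insert j T, by rw [card_insert_of_notMem hjT, hTk], c j, hc j, ?_, ?_⟩
    · intro i hi
      rcases mem_insert.mp hi with rfl | hi
      exacts [le_rfl, (hTm i hi).trans (hmT j hjT)]
    · intro i hi
      exact hj i (mem_compl.mpr fun h => hi (mem_insert_of_mem h))

theorem sum_le_sum_mul_of_le_thDXhold_le (T : Finset ι) (c t : ι → ℝ) {m : ℝ} (hm : 0 ≤ m)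
    (hTm : ∀ i ∈ T, c i ≤ m) (hmT : ∀ i ∉ T, m ≤ c i)
    (ht₀ : 0 ≤ t) (ht₁ : t ≤ 1) (hcard : (#T : ℝ) ≤ ∑ i, t i) :
    ∑ i ∈ T, c i ≤ ∑ i, c i * t i := by
  have hin : ∑ i ∈ T, c i - ∑ i ∈ T, c i * t i ≤ m * ∑ i ∈ T, (1 - t i) := by
    rw [← sum_sub_distrib, mul_sum]
    refine sum_le_sum fun i hi => ?_
    rw [← mul_one_sub]
    exact mul_le_mul_of_nonneg_right (hTm i hi) (sub_nonneg.mpr (ht₁ i))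
  have hout : m * ∑ i ∈ Tᶜ, t i ≤ ∑ i ∈ Tᶜ, c i * t i := by
    rw [mul_sum]
    exact sum_le_sum fun i hi => mul_le_mul_of_nonneg_right (hmT i (mem_compl.mp hi)) (ht₀ i)
  -- the mass `t` lacks on `T` sits on `Tᶜ`, where `c ≥ m`
  have hmass : ∑ i ∈ T, (1 - t i) ≤ ∑ i ∈ Tᶜ, t i := by
    rw [sum_sub_distrib, sum_const, nsmul_one]
    linarith [sum_add_sum_compl T t]
  linarith [mul_le_mul_of_nonneg_left hmass hm, sum_add_sum_compl T (fun i => c i * t i)]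

end ThDXhold

section Frobenius

variable {m n k : Type*}

theorem trace_transpose_mul_self_nonneg [Fintype m] [Fintype n] (A : Matrix m n ℝ) :
    0 ≤ (Aᵀ * A).trace := by
  simpa using (posSemidef_conjTranspose_mul_self A).trace_nonneg

theorem trace_transpose_mul_self_conj [Fintype m] [Fintype n] [DecidableEq n] (A : Matrix n n ℝ)
    {U : Matrix m n ℝ} (hU : Uᵀ * U = 1) :
    ((U * A * Uᵀ)ᵀ * (U * A * Uᵀ)).trace = (Aᵀ * A).trace := by
  have : (U * A * Uᵀ)ᵀ * (U * A * Uᵀ) = U * (Aᵀ * (Uᵀ * U) * A) * Uᵀ := by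
    simp only [transpose_mul, transpose_transpose, Matrix.mul_assoc]
  rw [this, hU, Matrix.mul_one, trace_mul_cycle, hU, Matrix.one_mul]

theorem trace_transpose_mul_self_mul_le [Fintype m] [Fintype n] [Fintype k] [DecidableEq n]
    [DecidableEq k] (A : Matrix m n ℝ) {W : Matrix n k ℝ} (hW : Wᵀ * W = 1) :
    ((A * W)ᵀ * (A * W)).trace ≤ (Aᵀ * A).trace := by
  set Q := 1 - W * Wᵀ
  have hQ : Qᵀ = Q := by simp [Q, transpose_sub]
  have hQQ : Q * Q = Q := by
    simp only [Q, Matrix.sub_mul, Matrix.mul_sub, Matrix.one_mul, Matrix.mul_one,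
      Matrix.mul_assoc, ← Matrix.mul_assoc Wᵀ, hW]
    abel
  have hsplit : (Aᵀ * A).trace = ((A * W)ᵀ * (A * W)).trace + ((A * Q)ᵀ * (A * Q)).trace := by
    have h₁ : ((A * W)ᵀ * (A * W)).trace = (Aᵀ * A * (W * Wᵀ)).trace := by
      rw [transpose_mul, Matrix.mul_assoc, trace_mul_comm]
      simp only [Matrix.mul_assoc]
    have h₂ : ((A * Q)ᵀ * (A * Q)).trace = (Aᵀ * A * Q).trace := by
      rw [transpose_mul, hQ, Matrix.mul_assoc, trace_mul_comm]
      simp only [Matrix.mul_assoc, hQQ]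
    rw [h₁, h₂, ← trace_add, ← Matrix.mul_add]
    simp [Q]
  linarith [trace_transpose_mul_self_nonneg (A * Q)]

theorem trace_transpose_mul_self_diagonal_mul [Fintype n] [Fintype k] [DecidableEq n] (d : n → ℝ)
    (W : Matrix n k ℝ) :
    ((diagonal d * W)ᵀ * (diagonal d * W)).trace = ∑ i, d i ^ 2 * (W * Wᵀ) i i := by
  simp only [trace, Matrix.diag, mul_apply (M := (diagonal d * W)ᵀ), transpose_apply,
    diagonal_mul, mul_apply (M := W), mul_sum]
  rw [sum_comm]
  exact sum_congr rfl fun i _ => sum_congr rfl fun j _ => by ring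

theorem mul_transpose_apply_self_nonneg [Fintype k] (W : Matrix n k ℝ) (i : n) :
    0 ≤ (W * Wᵀ) i i :=
  sum_nonneg fun j _ => mul_self_nonneg (W i j)

theorem mul_transpose_apply_self_le_one [Fintype n] [Fintype k] [DecidableEq k]
    {W : Matrix n k ℝ} (hW : Wᵀ * W = 1) (i : n) : (W * Wᵀ) i i ≤ 1 := by
  set P := W * Wᵀ
  have hP : P * P = P := by
    simp only [P, Matrix.mul_assoc, ← Matrix.mul_assoc Wᵀ, hW, Matrix.one_mul]
  have hsq : P i i ^ 2 ≤ P i i := by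
    calc P i i ^ 2 ≤ ∑ j, P i j * P j i := by
          have : ∀ j, P j i = P i j := fun j => by simp [P, mul_apply, mul_comm]
          simp only [this, ← sq]
          exact single_le_sum (f := fun j => P i j ^ 2) (fun j _ => sq_nonneg _) (mem_univ i)
      _ = P i i := by rw [← mul_apply, hP]
  nlinarith [mul_transpose_apply_self_nonneg W i]

theorem trace_mul_transpose [Fintype n] [Fintype k] [DecidableEq k] {W : Matrix n k ℝ}
    (hW : Wᵀ * W = 1) : (W * Wᵀ).trace = Fintype.card k := by
  rw [trace_mul_comm, hW, trace_one]

theorem exists_orthonormal_cols_mul_eq_zero [Fintype m] [Fintype n] [DecidableEq n]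
    (Z : Matrix m n ℝ) : ∃ (k : ℕ) (W : Matrix n (Fin k) ℝ),
      Wᵀ * W = 1 ∧ Z * W = 0 ∧ k + Z.rank = Fintype.card n := by
  let b := stdOrthonormalBasis ℝ (LinearMap.ker (toEuclideanLin Z))
  refine ⟨_, Matrix.of fun i j => (b j : EuclideanSpace ℝ n) i, ?_, ?_, ?_⟩
  · ext j j'
    have := orthonormal_iff_ite.mp b.orthonormal j' j
    rw [Submodule.coe_inner, PiLp.inner_apply] at this
    simp only [mul_apply, one_apply, transpose_apply, of_apply]
    simp only [RCLike.inner_apply, conj_trivial] at this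
    rw [this]
    exact if_congr eq_comm rfl rfl
  · ext i j
    have h : Z *ᵥ (b j : EuclideanSpace ℝ n).ofLp = 0 :=
      congrArg WithLp.ofLp (LinearMap.mem_ker.mp (b j).2)
    simpa only [mul_apply, of_apply, Matrix.zero_apply, mulVec, dotProduct, Pi.zero_apply]
      using congrFun h i
  · have hrank : Z.rank = Module.finrank ℝ (LinearMap.range (toEuclideanLin Z)) :=
      Z.rank_eq_finrank_range_toLin (EuclideanSpace.basisFun m ℝ).toBasis
        (EuclideanSpace.basisFun n ℝ).toBasis
    have := LinearMap.finrank_range_add_finrank_ker (toEuclideanLin Z)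
    rw [finrank_euclideanSpace] at this
    omega

end Frobenius

section EckartYoung

variable {n : Type*} [Fintype n] [DecidableEq n]

theorem exists_isSymm_rank_le_forall_trace_le_diagonal (d : n → ℝ) (r : ℕ) :
    ∃ X : Matrix n n ℝ, X.IsSymm ∧ X.rank ≤ r ∧ ∀ Z : Matrix n n ℝ, Z.rank ≤ r →
      ((diagonal d - X)ᵀ * (diagonal d - X)).trace ≤
        ((diagonal d - Z)ᵀ * (diagonal d - Z)).trace := by
  -- `T` is empty when `r ≥ card n`, by truncated subtraction
  obtain ⟨T, hTcard, m, hm, hTm, hmT⟩ :=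
    exists_card_eq_le_thDXhold_le (fun i => d i ^ 2) (fun i => sq_nonneg (d i))
      (Nat.sub_le (Fintype.card n) r)
  refine ⟨diagonal fun i => if i ∈ T then 0 else d i, isSymm_diagonal _, ?_, fun Z hZ => ?_⟩
  · rw [rank_diagonal, Fintype.card_subtype]
    calc #{i | (if i ∈ T then 0 else d i) ≠ 0} ≤ #Tᶜ :=
          card_le_card fun i hi => mem_compl.mpr fun hiT => (mem_filter.mp hi).2 (if_pos hiT)
      _ ≤ r := by rw [card_compl]; omega
  have hDX : diagonal d - diagonal (fun i => if i ∈ T then 0 else d i) =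
      diagonal (fun i => if i ∈ T then d i else 0) := by
    rw [diagonal_sub]
    congr 1
    ext i
    split_ifs <;> ring
  obtain ⟨k, W, hW, hZW, hk⟩ := exists_orthonormal_cols_mul_eq_zero Z
  calc _ = ∑ i ∈ T, d i ^ 2 := by
        rw [hDX, ← Matrix.mul_one (diagonal _), trace_transpose_mul_self_diagonal_mul]
        simp
    _ ≤ ∑ i, d i ^ 2 * (W * Wᵀ) i i := by
        refine sum_le_sum_mul_of_le_thDXhold_le T _ _ hm hTm hmT
          (mul_transpose_apply_self_nonneg W) (mul_transpose_apply_self_le_one hW) ?_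
        change ((#T : ℕ) : ℝ) ≤ (W * Wᵀ).trace
        rw [trace_mul_transpose hW, Fintype.card_fin]
        exact_mod_cast (by omega : #T ≤ k)
    _ = (((diagonal d - Z) * W)ᵀ * ((diagonal d - Z) * W)).trace := by
        rw [Matrix.sub_mul, hZW, sub_zero, trace_transpose_mul_self_diagonal_mul]
    _ ≤ _ := trace_transpose_mul_self_mul_le _ hW

end EckartYoung

theorem symmetric_best_low_rank_approx_general (p r : ℕ)
    (M : Matrix (Fin p) (Fin p) ℝ) (hM : M.IsSymm) :
    ∃ X : Matrix (Fin p) (Fin p) ℝ, X.IsSymm ∧ X.rank ≤ r ∧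
      ∀ Y : Matrix (Fin p) (Fin p) ℝ, Y.rank ≤ r →
        frobNorm (M - X) ≤ frobNorm (M - Y) := by
  have hH : M.IsHermitian := isHermitian_iff_isSymm.mpr hM
  set U : Matrix (Fin p) (Fin p) ℝ := ↑hH.eigenvectorUnitary
  have hU : Uᵀ * U = 1 := by
    simpa [star_eq_conjTranspose] using mem_unitaryGroup_iff'.mp hH.eigenvectorUnitary.2
  have hU' : U * Uᵀ = 1 := mul_eq_one_comm.mp hU
  have hspec : M = U * diagonal hH.eigenvalues * Uᵀ := by
    simpa [star_eq_conjTranspose, Function.comp_def] using hH.spectral_theorem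
  obtain ⟨X, hXs, hXr, hX⟩ := exists_isSymm_rank_le_forall_trace_le_diagonal hH.eigenvalues r
  refine ⟨U * X * Uᵀ, ?_, (rank_mul_le_left _ _).trans ((rank_mul_le_right _ _).trans hXr),
    fun Y hY => ?_⟩
  · simp only [IsSymm, transpose_mul, transpose_transpose, hXs.eq, Matrix.mul_assoc]
  have hY' : Y = U * (Uᵀ * Y * U) * Uᵀ := by
    simp only [← Matrix.mul_assoc, hU', Matrix.one_mul]
    rw [Matrix.mul_assoc, hU', Matrix.mul_one]
  unfold frobNorm
  rw [hspec, hY', ← Matrix.sub_mul, ← Matrix.mul_sub, ← Matrix.sub_mul, ← Matrix.mul_sub,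
    trace_transpose_mul_self_conj _ hU, trace_transpose_mul_self_conj _ hU]
  exact Real.sqrt_le_sqrt <|
    hX _ (((rank_mul_le_left _ _).trans (rank_mul_le_right _ _)).trans hY)

/-- A best Frobenius-norm approximation of rank at most `r` to a
symmetric matrix `M` can be chosen symmetric: there is a symmetric `X` with
`rank X ≤ r` such that `‖M − X‖_F ≤ ‖M − Y‖_F` for every matrix `Y` of rank at most
`r`. -/
theorem symmetric_best_low_rank_approx (p r : ℕ) (hr : r ≤ p)
    (M : Matrix (Fin p) (Fin p) ℝ) (hM : M.IsSymm) :
    ∃ X : Matrix (Fin p) (Fin p) ℝ, X.IsSymm ∧ X.rank ≤ r ∧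
      ∀ Y : Matrix (Fin p) (Fin p) ℝ, Y.rank ≤ r →
        frobNorm (M - X) ≤ frobNorm (M - Y) :=
  symmetric_best_low_rank_approx_general p r M hM
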